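/- Let φ : B(H) → B(H) be an additive map on the bounded operators of an infinite-dimensional complex Hilbert space such that H_{φ(T)}({λ}) = H_T({λ}) for every T ∈ B(H) and λ ∈ ℂ. Then φ is the identity map. -/

import Mathlib

open scoped InnerProductSpace Pointwise
open ContinuousLinearMap

variable {H : Type*} [NormedAddCommGroup H] [InnerProductSpace ℂ H] [CompleteSpace H]

/-- The local resolvent set of `T` at `x`. -/
def localResolvent (T : H →L[ℂ] H) (x : H) : Set ℂ :=
  {μ | ∃ U : Set ℂ, IsOpen U ∧ μ ∈ U ∧ ∃ f : ℂ → H, AnalyticOnNhd ℂ f U ∧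
      ∀ z ∈ U, z • f z - T (f z) = x}

/-- The local spectrum of `T` at `x`. -/
def localSpectrum (T : H →L[ℂ] H) (x : H) : Set ℂ := (localResolvent T x)ᶜ

/-- The local spectral subspace `H_T(F)`. -/
def localSubspace (T : H →L[ℂ] H) (F : Set ℂ) : Set H :=
  {x | localSpectrum T x ⊆ F}

/-- The rank-one operator `x ⊗ y : z ↦ ⟨z,y⟩x` (inner product conjugate-linear in
the second variable, i.e. `⟪y, z⟫` in Mathlib's convention). -/
noncomputable def rankOne (x y : H) : H →L[ℂ] H := (innerSL ℂ y).smulRight x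

/-- The single-valued extension property. -/
def HasSVEP (T : H →L[ℂ] H) : Prop :=
  ∀ U : Set ℂ, IsOpen U → ∀ f : ℂ → H, AnalyticOnNhd ℂ f U →
    (∀ μ ∈ U, μ • f μ - T (f μ) = 0) → ∀ μ ∈ U, f μ = 0

/-!
Three facts about local spectral subspaces drive the proof: an eigenvector of `T` for `λ` lies
in `H_T({λ})`, the subspace `H_T({λ})` is `T`-invariant, and a vector `e` with `T* e = μ̄ e`,
`μ ≠ λ`, is orthogonal to `H_T({λ})` (evaluate the local resolvent equation at `μ` against `e`).

Applied to `u ⊗ v` with `⟪v, u⟫ ≠ 0` (whose adjoint has eigenvectors `v` and `u^⊥`) and to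
`u ⊗ v + w ⊗ w` with `w ⊥ u`, they show that `φ(u ⊗ v)` agrees with `u ⊗ v` on `u` and on
`v^⊥`; splitting off `u ⊗ u` handles `⟪v, u⟫ = 0`. So `φ` fixes all finite-rank operators and
`φ(T + F) = φ(T) + F`. If `φ(T) x ≠ T x`, a rank-two `F` makes `x` a kernel vector of
`φ(T) + F` while `T + F` has an adjoint eigenvector `e` for a nonzero eigenvalue with
`⟪e, x⟫ ≠ 0`, contradicting `H_{φ(T)+F}({0}) = H_{T+F}({0})`.
-/

open Submodule

section

omit [CompleteSpace H]

section LocalSpectrum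

variable {T : H →L[ℂ] H} {x : H}

theorem mem_localSubspace_of_apply_eq_smul {lam : ℂ} (h : T x = lam • x) :
    x ∈ localSubspace T {lam} := by
  intro μ hμ
  by_contra hne
  refine hμ ⟨{lam}ᶜ, isOpen_compl_singleton, hne, fun z => (z - lam)⁻¹ • x, ?_, fun z hz => ?_⟩
  · exact ((analyticOnNhd_id.sub analyticOnNhd_const).inv
      fun z hz => sub_ne_zero.mpr hz).smul analyticOnNhd_const
  · have hz' : z - lam ≠ 0 := sub_ne_zero.mpr hz
    have hcoef : z * (z - lam)⁻¹ - (z - lam)⁻¹ * lam = 1 := by field_simp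
    rw [map_smul, h, smul_smul, smul_smul, ← sub_smul, hcoef, one_smul]

theorem localResolvent_subset_localResolvent_apply :
    localResolvent T x ⊆ localResolvent T (T x) := by
  rintro μ ⟨U, hU, hμU, f, hf, hsol⟩
  refine ⟨U, hU, hμU, fun z => T (f z), fun z hz => (T.analyticAt _).comp (hf z hz),
    fun z hz => ?_⟩
  rw [← hsol z hz, map_sub, map_smul]

theorem apply_mem_localSubspace {F : Set ℂ} (h : x ∈ localSubspace T F) :
    T x ∈ localSubspace T F :=
  (Set.compl_subset_compl.mpr localResolvent_subset_localResolvent_apply).trans h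

theorem inner_eq_zero_of_mem_localSubspace {F : Set ℂ} {e : H} {μ : ℂ}
    (hx : x ∈ localSubspace T F) (he : ∀ z, ⟪e, T z⟫_ℂ = μ * ⟪e, z⟫_ℂ) (hμ : μ ∉ F) :
    ⟪e, x⟫_ℂ = 0 := by
  obtain ⟨U, -, hμU, f, -, hsol⟩ : μ ∈ localResolvent T x := by
    by_contra h
    exact hμ (hx h)
  rw [← hsol μ hμU, inner_sub_right, inner_smul_right, he, sub_self]

end LocalSpectrum

section LinearAlgebra

theorem rankOne_apply (x y z : H) : rankOne x y z = ⟪y, z⟫_ℂ • x := rfl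

theorem inner_rankOne_apply (e x y z : H) :
    ⟪e, rankOne x y z⟫_ℂ = ⟪y, z⟫_ℂ * ⟪e, x⟫_ℂ :=
  inner_smul_right _ _ _

theorem rankOne_add_right (x y y' : H) : rankOne x (y + y') = rankOne x y + rankOne x y' := by
  ext z
  simp only [rankOne_apply, add_apply, inner_add_left, add_smul]

theorem mem_of_forall_inner_eq_zero {K : Submodule ℂ H} [K.HasOrthogonalProjection] {y : H}
    (h : ∀ w ∈ Kᗮ, ⟪w, y⟫_ℂ = 0) : y ∈ K := by
  rw [← K.orthogonal_orthogonal]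
  exact (Kᗮ.mem_orthogonal y).mpr h

theorem exists_inner_eq_one {x : H} (hx : x ≠ 0) : ∃ y, ⟪x, y⟫_ℂ = 1 :=
  ⟨(⟪x, x⟫_ℂ)⁻¹ • x, by rw [inner_smul_right, inv_mul_cancel₀ (inner_self_ne_zero.mpr hx)]⟩

theorem exists_inner_ne_zero_and_inner_ne_zero {x y : H} (hx : x ≠ 0) (hy : y ≠ 0) :
    ∃ e, ⟪e, x⟫_ℂ ≠ 0 ∧ ⟪e, y⟫_ℂ ≠ 0 := by
  by_cases hxy : ⟪x, y⟫_ℂ = 0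
  · refine ⟨x + y, ?_, ?_⟩
    · rw [inner_add_left, inner_eq_zero_symm.mp hxy, add_zero]
      exact inner_self_ne_zero.mpr hx
    · rw [inner_add_left, hxy, zero_add]
      exact inner_self_ne_zero.mpr hy
  · exact ⟨x, inner_self_ne_zero.mpr hx, hxy⟩

end LinearAlgebra

section LocalSubspacePreserver

variable {φ : (H →L[ℂ] H) → (H →L[ℂ] H)}
  (hloc : ∀ (T : H →L[ℂ] H) (lam : ℂ), localSubspace (φ T) {lam} = localSubspace T {lam})
include hloc

theorem inner_eq_zero_of_map_apply_eq_smul {S : H →L[ℂ] H} {x e : H} {lam μ : ℂ}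
    (hx : φ S x = lam • x) (he : ∀ z, ⟪e, S z⟫_ℂ = μ * ⟪e, z⟫_ℂ) (hμ : μ ≠ lam) :
    ⟪e, x⟫_ℂ = 0 :=
  inner_eq_zero_of_mem_localSubspace (hloc S lam ▸ mem_localSubspace_of_apply_eq_smul hx) he hμ

theorem inner_map_apply_eq_zero_of_apply_eq_smul {S : H →L[ℂ] H} {x e : H} {lam μ : ℂ}
    (hx : S x = lam • x) (he : ∀ z, ⟪e, S z⟫_ℂ = μ * ⟪e, z⟫_ℂ) (hμ : μ ≠ lam) :
    ⟪e, φ S x⟫_ℂ = 0 := by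
  have h := apply_mem_localSubspace
    ((hloc S lam).symm ▸ mem_localSubspace_of_apply_eq_smul hx : x ∈ localSubspace (φ S) {lam})
  rw [hloc] at h
  exact inner_eq_zero_of_mem_localSubspace h he hμ

variable {u v : H}

theorem inner_map_rankOne_apply_eq_zero (hα : ⟪v, u⟫_ℂ ≠ 0) {k : H} (hk : ⟪v, k⟫_ℂ = 0) :
    ⟪v, φ (rankOne u v) k⟫_ℂ = 0 :=
  inner_map_apply_eq_zero_of_apply_eq_smul hloc (lam := 0)
    (by rw [rankOne_apply, hk, zero_smul, zero_smul])
    (fun z => by rw [inner_rankOne_apply, mul_comm]) hα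

theorem map_rankOne_apply_self (hα : ⟪v, u⟫_ℂ ≠ 0) : φ (rankOne u v) u = ⟪v, u⟫_ℂ • u := by
  obtain ⟨s, hs⟩ := mem_span_singleton.mp <| mem_of_forall_inner_eq_zero fun w hw =>
    inner_map_apply_eq_zero_of_apply_eq_smul hloc (rankOne_apply u v u)
      (fun z => by rw [inner_rankOne_apply, mem_orthogonal_singleton_iff_inner_left.mp hw,
        mul_zero, zero_mul]) hα.symm
  obtain rfl : s = ⟪v, u⟫_ℂ := by
    by_contra hsα
    exact hα (inner_eq_zero_of_map_apply_eq_smul hloc hs.symm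
      (fun z => by rw [inner_rankOne_apply, mul_comm]) (Ne.symm hsα))
  exact hs.symm

variable (hadd : ∀ T S : H →L[ℂ] H, φ (T + S) = φ T + φ S)
include hadd

theorem inner_map_rankOne_apply_eq_zero_of_orthogonal {k w : H}
    (hk : ⟪v, k⟫_ℂ = 0) (hwu : ⟪w, u⟫_ℂ = 0) (hwk : ⟪w, k⟫_ℂ = 0) :
    ⟪w, φ (rankOne u v) k⟫_ℂ = 0 := by
  rcases eq_or_ne w 0 with rfl | hw
  · exact inner_zero_left _
  have hww : ⟪w, w⟫_ℂ ≠ 0 := inner_self_ne_zero.mpr hw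
  -- `u ⊗ v + w ⊗ w` kills `k`, and `w` is an eigenvector of its adjoint for `‖w‖² ≠ 0`
  have h := inner_map_apply_eq_zero_of_apply_eq_smul hloc
    (S := rankOne u v + rankOne w w) (lam := 0) (μ := ⟪w, w⟫_ℂ)
    (by rw [add_apply, rankOne_apply, rankOne_apply, hk, hwk, zero_smul, zero_smul, zero_smul,
      add_zero])
    (fun z => by rw [add_apply, inner_add_right, inner_rankOne_apply, inner_rankOne_apply, hwu,
      mul_zero, zero_add, mul_comm]) hww
  rwa [hadd, add_apply, inner_add_right, inner_map_rankOne_apply_eq_zero hloc hww hwk,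
    add_zero] at h

theorem map_rankOne_apply_eq_zero (hα : ⟪v, u⟫_ℂ ≠ 0) {k : H} (hk : ⟪v, k⟫_ℂ = 0) :
    φ (rankOne u v) k = 0 := by
  have : FiniteDimensional ℂ (span ℂ {u, k}) := .span_of_finite ℂ (Set.toFinite _)
  have hu : u ∈ span ℂ {u, k} := subset_span (Set.mem_insert u {k})
  have hk' : k ∈ span ℂ {u, k} := subset_span (Set.mem_insert_of_mem u (Set.mem_singleton k))
  obtain ⟨a, b, hab⟩ := mem_span_pair.mp <| mem_of_forall_inner_eq_zero fun w hw =>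
    inner_map_rankOne_apply_eq_zero_of_orthogonal hloc hadd hk
      (inner_left_of_mem_orthogonal hu hw) (inner_left_of_mem_orthogonal hk' hw)
  obtain rfl : a = 0 := by
    have h := inner_map_rankOne_apply_eq_zero hloc hα hk
    rw [← hab, inner_add_right, inner_smul_right, inner_smul_right, hk, mul_zero,
      add_zero] at h
    exact (mul_eq_zero.mp h).resolve_right hα
  rw [zero_smul, zero_add] at hab
  rcases eq_or_ne b 0 with rfl | hb
  · rw [← hab, zero_smul]
  -- `k` is an eigenvector of `φ (u ⊗ v)` for `b ≠ 0`, hence `k ∈ ℂ u`, and `k ⊥ v` forces `k = 0`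
  obtain ⟨c, rfl⟩ := mem_span_singleton.mp <| mem_of_forall_inner_eq_zero fun w hw =>
    inner_eq_zero_of_map_apply_eq_smul hloc hab.symm (μ := 0)
      (fun z => by rw [inner_rankOne_apply, mem_orthogonal_singleton_iff_inner_left.mp hw,
        mul_zero, zero_mul]) hb.symm
  rw [inner_smul_right] at hk
  rw [(mul_eq_zero.mp hk).resolve_right hα, zero_smul, map_zero]

theorem map_rankOne_of_inner_ne_zero (hα : ⟪v, u⟫_ℂ ≠ 0) : φ (rankOne u v) = rankOne u v := by
  ext z
  set c := ⟪v, z⟫_ℂ / ⟪v, u⟫_ℂ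
  have hk : ⟪v, z - c • u⟫_ℂ = 0 := by
    rw [inner_sub_right, inner_smul_right, div_mul_cancel₀ _ hα, sub_self]
  calc φ (rankOne u v) z = φ (rankOne u v) (z - c • u) + c • φ (rankOne u v) u := by
        rw [← map_smul, ← map_add, sub_add_cancel]
    _ = c • (⟪v, u⟫_ℂ • u) := by
        rw [map_rankOne_apply_eq_zero hloc hadd hα hk, map_rankOne_apply_self hloc hα, zero_add]
    _ = rankOne u v z := by rw [rankOne_apply, smul_smul, div_mul_cancel₀ _ hα]

theorem map_rankOne (u v : H) : φ (rankOne u v) = rankOne u v := by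
  rcases eq_or_ne u 0 with rfl | hu
  · have h0 : rankOne (0 : H) v = 0 := by
      ext z
      rw [rankOne_apply, smul_zero, zero_apply]
    have hφ0 := hadd 0 0
    rw [add_zero, left_eq_add] at hφ0
    rw [h0, hφ0]
  rcases ne_or_eq ⟪v, u⟫_ℂ 0 with hα | hα
  · exact map_rankOne_of_inner_ne_zero hloc hadd hα
  have huu : ⟪u, u⟫_ℂ ≠ 0 := inner_self_ne_zero.mpr hu
  have h := hadd (rankOne u v) (rankOne u u)
  rw [← rankOne_add_right,
    map_rankOne_of_inner_ne_zero hloc hadd (by rwa [inner_add_left, hα, zero_add]),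
    map_rankOne_of_inner_ne_zero hloc hadd huu, rankOne_add_right] at h
  exact (add_right_cancel h).symm

end LocalSubspacePreserver

end

/-- The correction `F = a ⊗ g + c ⊗ d` is built from `⟪e, a⟫ = 1`, `⟪d, x⟫ = 1` and
`g = μ̄ e - T* e`; the choice of `μ` is what makes `⟪e, c⟫ = 0`. -/
theorem exists_rankOne_add_rankOne {A T : H →L[ℂ] H} {x e : H} {μ : ℂ} (he : ⟪e, x⟫_ℂ ≠ 0)
    (hμ : μ * ⟪e, x⟫_ℂ = ⟪e, T x - A x⟫_ℂ) :
    ∃ a g c d : H, (A + (rankOne a g + rankOne c d)) x = 0 ∧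
      ∀ z, ⟪e, (T + (rankOne a g + rankOne c d)) z⟫_ℂ = μ * ⟪e, z⟫_ℂ := by
  obtain ⟨a, ha⟩ := exists_inner_eq_one fun h : e = 0 => he (by rw [h, inner_zero_left])
  obtain ⟨d, hd⟩ := exists_inner_eq_one fun h : x = 0 => he (by rw [h, inner_zero_right])
  rw [← inner_conj_symm, map_eq_one_iff _ (starRingEnd ℂ).injective] at hd
  set g := starRingEnd ℂ μ • e - adjoint T e
  have hg : ∀ z, ⟪g, z⟫_ℂ = μ * ⟪e, z⟫_ℂ - ⟪e, T z⟫_ℂ := fun z => by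
    rw [inner_sub_left, inner_smul_left, adjoint_inner_left, RCLike.conj_conj]
  refine ⟨a, g, -A x - ⟪g, x⟫_ℂ • a, d, ?_, fun z => ?_⟩
  · rw [add_apply, add_apply, rankOne_apply, rankOne_apply, hd, one_smul]
    abel
  · rw [add_apply, add_apply, inner_add_right, inner_add_right, inner_rankOne_apply,
      inner_rankOne_apply, ha, hg, hg, inner_sub_right, inner_neg_right, inner_smul_right, ha]
    rw [inner_sub_right] at hμ
    linear_combination -⟪d, z⟫_ℂ * hμ

theorem stmt15_general (φ : (H →L[ℂ] H) → (H →L[ℂ] H))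
    (hadd : ∀ T S : H →L[ℂ] H, φ (T + S) = φ T + φ S)
    (hloc : ∀ (T : H →L[ℂ] H) (lam : ℂ),
      localSubspace (φ T) {lam} = localSubspace T {lam}) :
    ∀ T : H →L[ℂ] H, φ T = T := by
  intro T
  ext x
  by_contra hne
  have hx : x ≠ 0 := by
    rintro rfl
    exact hne (by rw [map_zero, map_zero])
  obtain ⟨e, hex, hed⟩ :=
    exists_inner_ne_zero_and_inner_ne_zero hx (sub_ne_zero.mpr (Ne.symm hne))
  obtain ⟨a, g, c, d, hker, heig⟩ := exists_rankOne_add_rankOne (A := φ T) hex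
    (div_mul_cancel₀ _ hex)
  have hφ : φ (T + (rankOne a g + rankOne c d)) = φ T + (rankOne a g + rankOne c d) := by
    rw [hadd, hadd, map_rankOne hloc hadd, map_rankOne hloc hadd]
  exact hex (inner_eq_zero_of_map_apply_eq_smul hloc (by rw [hφ, hker, zero_smul]) heig
    (div_ne_zero hed hex))

theorem stmt15 (hH : ¬ FiniteDimensional ℂ H)
    (φ : (H →L[ℂ] H) → (H →L[ℂ] H))
    (hadd : ∀ T S : H →L[ℂ] H, φ (T + S) = φ T + φ S)
    (hloc : ∀ (T : H →L[ℂ] H) (lam : ℂ),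
      localSubspace (φ T) {lam} = localSubspace T {lam}) :
    ∀ T : H →L[ℂ] H, φ T = T :=
  stmt15_general φ hadd hloc
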